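/- Let (L,E) be a connected graph on vertex set L = [n] with n ≥ 3, let i, j ∈ [n] be distinct, and let F = {τ ∈ S_n : {τ⁻¹(i), τ⁻¹(j)} ∈ E}. If a, b ∈ S_n satisfy a τ b⁻¹ = τ for all τ ∈ F, then a = b = id. -/
import Mathlib

lemma exists_perm_three {α : Type*} [DecidableEq α] {p q r i j x : α}
    (hpq : p ≠ q) (hpr : p ≠ r) (hqr : q ≠ r) (hij : i ≠ j) (hix : i ≠ x) (hjx : j ≠ x) :
    ∃ τ : Equiv.Perm α, τ p = i ∧ τ q = j ∧ τ r = x := by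
  classical
  set t1 := Equiv.swap p i with ht1
  set t2 := Equiv.swap (t1 q) j with ht2
  set t3 := Equiv.swap (t2 (t1 r)) x with ht3
  have e1p : t1 p = i := Equiv.swap_apply_left p i
  have h1q : t1 q ≠ i := fun hh => hpq (t1.injective (e1p.trans hh.symm))
  have h1r : t1 r ≠ i := fun hh => hpr (t1.injective (e1p.trans hh.symm))
  have h2i : t2 i = i := Equiv.swap_apply_of_ne_of_ne (fun hh => h1q hh.symm) hij
  have e2q : t2 (t1 q) = j := Equiv.swap_apply_left _ j
  have h2r_ne_i : t2 (t1 r) ≠ i := fun hh => h1r (t2.injective (hh.trans h2i.symm))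
  have h2r_ne_j : t2 (t1 r) ≠ j :=
    fun hh => hqr (t1.injective (t2.injective (e2q.trans hh.symm)))
  have h3i : t3 i = i := Equiv.swap_apply_of_ne_of_ne (fun hh => h2r_ne_i hh.symm) hix
  have h3j : t3 j = j := Equiv.swap_apply_of_ne_of_ne (fun hh => h2r_ne_j hh.symm) hjx
  have e3r : t3 (t2 (t1 r)) = x := Equiv.swap_apply_left _ x
  refine ⟨t3 * (t2 * t1), ?_, ?_, ?_⟩
  · simp only [Equiv.Perm.mul_apply]
    rw [e1p, h2i, h3i]
  · simp only [Equiv.Perm.mul_apply]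
    rw [e2q, h3j]
  · simp only [Equiv.Perm.mul_apply]
    exact e3r

lemma exists_hub (n : ℕ) (hn : 3 ≤ n) (G : SimpleGraph (Fin n)) (hconn : G.Connected) :
    ∃ p q r : Fin n, q ≠ r ∧ G.Adj p q ∧ G.Adj p r := by
  by_contra hc
  push_neg at hc
  have key : ∀ p q r : Fin n, G.Adj p q → G.Adj p r → q = r := by
    intro p q r h1 h2
    by_contra hne
    exact (hc p q r hne h1) h2
  have step : ∀ x y : Fin n, G.Reachable x y → x = y ∨ G.Adj x y := by
    intro x y hr
    obtain ⟨W⟩ := hr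
    induction W with
    | nil => exact Or.inl rfl
    | cons h' W ih =>
      rcases ih with rfl | hadj
      · exact Or.inr h'
      · exact Or.inl (key _ _ _ h'.symm hadj)
  set v0 : Fin n := ⟨0, by omega⟩ with hv0
  set v1 : Fin n := ⟨1, by omega⟩ with hv1
  set v2 : Fin n := ⟨2, by omega⟩ with hv2
  have h01 : v0 ≠ v1 := by simp [hv0, hv1, Fin.ext_iff]
  have h02 : v0 ≠ v2 := by simp [hv0, hv2, Fin.ext_iff]
  have h12 : v1 ≠ v2 := by simp [hv1, hv2, Fin.ext_iff]
  have a01 : G.Adj v0 v1 := (step v0 v1 (hconn.preconnected v0 v1)).resolve_left h01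
  have a02 : G.Adj v0 v2 := (step v0 v2 (hconn.preconnected v0 v2)).resolve_left h02
  exact h12 (key v0 v1 v2 a01 a02)
theorem fix_F_implies_identity
    (n : ℕ) (hn : 3 ≤ n) (G : SimpleGraph (Fin n)) (hconn : G.Connected)
    (i j : Fin n) (hij : i ≠ j) (a b : Equiv.Perm (Fin n))
    (h : ∀ τ : Equiv.Perm (Fin n), G.Adj (τ⁻¹ i) (τ⁻¹ j) → a * τ * b⁻¹ = τ) :
    a = 1 ∧ b = 1 := by
  classical
  obtain ⟨p, q, r, hqr, hpq, hpr⟩ := exists_hub n hn G hconn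
  have hpq' : p ≠ q := hpq.ne
  have hpr' : p ≠ r := hpr.ne
  -- general commuting principle
  have comm : ∀ s τ : Equiv.Perm (Fin n), G.Adj (τ⁻¹ i) (τ⁻¹ j) →
      G.Adj ((s * τ)⁻¹ i) ((s * τ)⁻¹ j) → a * s = s * a := by
    intro s τ h1 h2
    have e1' : a * τ = τ * b := mul_inv_eq_iff_eq_mul.mp (h τ h1)
    have e2' : a * (s * τ) = s * τ * b := mul_inv_eq_iff_eq_mul.mp (h (s * τ) h2)
    have ha' : a = τ * b * τ⁻¹ := by
      rw [eq_mul_inv_iff_mul_eq]; exact e1'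
    calc a * s = (a * (s * τ)) * τ⁻¹ := by group
      _ = s * τ * b * τ⁻¹ := by rw [e2']
      _ = s * a := by rw [ha']; group
  -- a commutes with swap j x for x ∉ {i, j}
  have H1 : ∀ x : Fin n, x ≠ i → x ≠ j → a * Equiv.swap j x = Equiv.swap j x * a := by
    intro x hxi hxj
    obtain ⟨τ, hτp, hτq, hτr⟩ := exists_perm_three hpq' hpr' hqr hij (Ne.symm hxi) (Ne.symm hxj)
    have hip : τ⁻¹ i = p := by rw [← hτp]; simp
    have hjq : τ⁻¹ j = q := by rw [← hτq]; simp
    have hxr : τ⁻¹ x = r := by rw [← hτr]; simp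
    refine comm (Equiv.swap j x) τ (by rw [hip, hjq]; exact hpq) ?_
    have hi : (Equiv.swap j x * τ)⁻¹ i = p := by
      simp only [mul_inv_rev, Equiv.Perm.mul_apply]
      rw [Equiv.swap_inv, Equiv.swap_apply_of_ne_of_ne hij (Ne.symm hxi), hip]
    have hj : (Equiv.swap j x * τ)⁻¹ j = r := by
      simp only [mul_inv_rev, Equiv.Perm.mul_apply]
      rw [Equiv.swap_inv, Equiv.swap_apply_left, hxr]
    rw [hi, hj]; exact hpr
  -- a commutes with swap i x for x ∉ {i, j}
  have H2 : ∀ x : Fin n, x ≠ i → x ≠ j → a * Equiv.swap i x = Equiv.swap i x * a := by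
    intro x hxi hxj
    obtain ⟨τ, hτq, hτp, hτr⟩ := exists_perm_three (Ne.symm hpq') hqr hpr'
      hij (Ne.symm hxi) (Ne.symm hxj)
    have hiq : τ⁻¹ i = q := by rw [← hτq]; simp
    have hjp : τ⁻¹ j = p := by rw [← hτp]; simp
    have hxr : τ⁻¹ x = r := by rw [← hτr]; simp
    refine comm (Equiv.swap i x) τ (by rw [hiq, hjp]; exact hpq.symm) ?_
    have hi : (Equiv.swap i x * τ)⁻¹ i = r := by
      simp only [mul_inv_rev, Equiv.Perm.mul_apply]
      rw [Equiv.swap_inv, Equiv.swap_apply_left, hxr]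
    have hj : (Equiv.swap i x * τ)⁻¹ j = p := by
      simp only [mul_inv_rev, Equiv.Perm.mul_apply]
      rw [Equiv.swap_inv, Equiv.swap_apply_of_ne_of_ne (Ne.symm hij) (Ne.symm hxj), hjp]
    rw [hi, hj]; exact hpr.symm
  -- there is a vertex outside {i, j}
  obtain ⟨z, hz⟩ : (({i, j} : Finset (Fin n))ᶜ).Nonempty := by
    rw [← Finset.card_pos, Finset.card_compl]
    have h2 : ({i, j} : Finset (Fin n)).card ≤ 2 :=
      (Finset.card_insert_le i {j}).trans (by simp)
    have hc : Fintype.card (Fin n) = n := Fintype.card_fin n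
    omega
  rw [Finset.mem_compl, Finset.mem_insert, Finset.mem_singleton] at hz
  push_neg at hz
  obtain ⟨hzi, hzj⟩ := hz
  -- pointwise facts about a
  have appeq : ∀ (s : Equiv.Perm (Fin n)) (y : Fin n),
      a * s = s * a → a (s y) = s (a y) := by
    intro s y hs
    have := congrArg (fun f : Equiv.Perm (Fin n) => f y) hs
    simpa using this
  have hai : a i = i := by
    by_contra hne
    have key : ∀ x : Fin n, x ≠ i → x ≠ j → a i ≠ j ∧ a i ≠ x := by
      intro x hxi hxj
      have h2 := appeq _ i (H1 x hxi hxj)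
      rw [Equiv.swap_apply_of_ne_of_ne hij (Ne.symm hxi)] at h2
      -- h2 : a i = swap j x (a i)
      constructor
      · intro hh
        rw [hh, Equiv.swap_apply_left] at h2
        exact hxj h2.symm
      · intro hh
        rw [hh, Equiv.swap_apply_right] at h2
        exact hxj h2
    have haij : a i ≠ j := (key z hzi hzj).1
    exact (key (a i) hne haij).2 rfl
  have haj : a j = j := by
    by_contra hne
    have key : ∀ x : Fin n, x ≠ i → x ≠ j → a j ≠ i ∧ a j ≠ x := by
      intro x hxi hxj
      have h2 := appeq _ j (H2 x hxi hxj)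
      rw [Equiv.swap_apply_of_ne_of_ne (Ne.symm hij) (Ne.symm hxj)] at h2
      -- h2 : a j = swap i x (a j)
      constructor
      · intro hh
        rw [hh, Equiv.swap_apply_left] at h2
        exact hxi h2.symm
      · intro hh
        rw [hh, Equiv.swap_apply_right] at h2
        exact hxi h2
    have haji : a j ≠ i := (key z hzi hzj).1
    exact (key (a j) haji hne).2 rfl
  have ha : a = 1 := by
    refine Equiv.ext fun y => ?_
    simp only [Equiv.Perm.coe_one, id_eq]
    by_cases hyi : y = i
    · rw [hyi]; exact hai
    by_cases hyj : y = j
    · rw [hyj]; exact haj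
    have h2 := appeq _ i (H2 y hyi hyj)
    rw [Equiv.swap_apply_left, hai, Equiv.swap_apply_left] at h2
    exact h2
  refine ⟨ha, ?_⟩
  obtain ⟨τ, hτp, hτq, hτr⟩ := exists_perm_three hpq' hpr' hqr hij (Ne.symm hzi) (Ne.symm hzj)
  have hip : τ⁻¹ i = p := by rw [← hτp]; simp
  have hjq : τ⁻¹ j = q := by rw [← hτq]; simp
  have e := h τ (by rw [hip, hjq]; exact hpq)
  rw [ha] at e
  have hb : b⁻¹ = 1 := by
    calc b⁻¹ = τ⁻¹ * (1 * τ * b⁻¹) := by group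
      _ = τ⁻¹ * τ := by rw [e]
      _ = 1 := by group
  simpa using inv_eq_one.mp hb
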